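/- arXiv:2405.03414 — 3 statements merged into one kernel-verified Lean document; each statement's English description precedes it below -/
import Mathlib

section
/- (Smooth special case of the zero-order linesearch) Let f : ℝ^d → ℝ be convex and differentiable, fix λ > 0 and x ∈ ℝ^d, and set x⁺ = x − λ∇f(x). If f(x − 2λ∇f(x)) ≤ f(x − λ∇f(x)) − (λ/2)‖∇f(x)‖², then ⟨x⁺ − x, ∇f(x⁺) − (1/2)∇f(x)⟩ ≤ 0. -/
open RealInnerProductSpace

lemma grad_ineq {d : ℕ} (f : EuclideanSpace ℝ (Fin d) → ℝ)
    (hf_conv : ConvexOn ℝ Set.univ f) (hf_diff : Differentiable ℝ f)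
    (a b : EuclideanSpace ℝ (Fin d)) :
    f a + ⟪gradient f a, b - a⟫ ≤ f b := by
  have hF : HasFDerivAt f ((InnerProductSpace.toDual ℝ _) (gradient f a)) a :=
    hasGradientAt_iff_hasFDerivAt.mp (hf_diff a).hasGradientAt
  -- curve h t = a + t • (b - a)
  set h : ℝ → EuclideanSpace ℝ (Fin d) := fun t => a + t • (b - a) with hh
  have hcurve : ∀ t : ℝ, HasDerivAt h (b - a) t := by
    intro t
    have : HasDerivAt (fun t : ℝ => t • (b - a)) ((1 : ℝ) • (b - a)) t :=
      (hasDerivAt_id t).smul_const (b - a)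
    rw [one_smul] at this
    exact this.const_add a
  have hg : HasDerivAt (f ∘ h) (⟪gradient f a, b - a⟫) 0 := by
    have h0 : h 0 = a := by simp [hh]
    have := (h0 ▸ hF).comp_hasDerivAt 0 (hcurve 0)
    simpa [hh] using this
  have hconv : ConvexOn ℝ Set.univ (f ∘ h) := by
    have haff : ConvexOn ℝ ((fun t : ℝ => a + t • (b - a)) ⁻¹' Set.univ)
        (f ∘ (AffineMap.lineMap a b : ℝ →ᵃ[ℝ] _)) :=
      hf_conv.comp_affineMap _
    have heq : f ∘ (AffineMap.lineMap a b : ℝ →ᵃ[ℝ] _) = f ∘ h := by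
      funext t
      have : (AffineMap.lineMap a b : ℝ →ᵃ[ℝ] _) t = a + t • (b - a) := by
        simp only [AffineMap.lineMap_apply, vsub_eq_sub, vadd_eq_add]
        module
      simp [Function.comp, this, hh]
    rw [Set.preimage_univ, heq] at haff
    exact haff
  have hle := hconv.le_slope_of_hasDerivAt (Set.mem_univ (0:ℝ)) (Set.mem_univ (1:ℝ))
    one_pos hg
  have hslope : slope (f ∘ h) 0 1 = f b - f a := by
    simp [slope, hh, Function.comp]
  rw [hslope] at hle
  linarith

/-- Smooth special case of the zero-order linesearch:
Let f : ℝ^d → ℝ be convex and differentiable, fix λ > 0 and x ∈ ℝ^d, and set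
x⁺ = x − λ∇f(x). If f(x − 2λ∇f(x)) ≤ f(x − λ∇f(x)) − (λ/2)‖∇f(x)‖², then
⟨x⁺ − x, ∇f(x⁺) − (1/2)∇f(x)⟩ ≤ 0. -/
theorem stmt_5 {d : ℕ} (f : EuclideanSpace ℝ (Fin d) → ℝ)
    (hf_conv : ConvexOn ℝ Set.univ f) (hf_diff : Differentiable ℝ f)
    (lam : ℝ) (hlam : 0 < lam)
    (x xplus : EuclideanSpace ℝ (Fin d))
    (hxplus : xplus = x - lam • gradient f x)
    (hls : f (x - (2 * lam) • gradient f x) ≤ f (x - lam • gradient f x)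
            - (lam / 2) * ‖gradient f x‖ ^ 2) :
    ⟪xplus - x, gradient f xplus - (1 / 2 : ℝ) • gradient f x⟫ ≤ 0 := by
  set g := gradient f x with hg
  have key := grad_ineq f hf_conv hf_diff xplus (x - (2 * lam) • g)
  have hdiff : x - (2 * lam) • g - xplus = -(lam • g) := by
    rw [hxplus]; module
  rw [hdiff] at key
  have hinner : ⟪gradient f xplus, -(lam • g)⟫ = -lam * ⟪gradient f xplus, g⟫ := by
    rw [inner_neg_right, real_inner_smul_right]; ring
  rw [hinner, hxplus] at key
  -- key : f (x - lam•g) + (-lam * ⟪∇f x⁺, g⟫) ≤ f (x - 2lam•g)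
  have h1 : lam * ⟪gradient f xplus, g⟫ ≥ (lam / 2) * ‖g‖ ^ 2 := by
    rw [hxplus]; linarith
  have hexp : ⟪xplus - x, gradient f xplus - (1 / 2 : ℝ) • g⟫
      = -lam * ⟪g, gradient f xplus⟫ + (lam / 2) * ‖g‖ ^ 2 := by
    rw [hxplus]
    have : x - lam • g - x = -(lam • g) := by module
    rw [this]
    simp only [inner_neg_left, inner_sub_right, real_inner_smul_left,
      real_inner_smul_right, real_inner_self_eq_norm_sq]
    ring
  rw [hexp, real_inner_comm]
  linarith
end

section
/- (Telescoping gap inequality) Fix λ > 0 and x ∈ ℝ^d, and set x⁺ = x − λG_λ(x). If the composite linesearch condition holds at x with stepsize λ, then for every z ∈ ℝ^d: F(x⁺) ≤ F(z) + (1/(2λ))(‖x − z‖² − ‖x⁺ − z‖²). -/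
open RealInnerProductSpace

lemma grad_convex_ineq {d : ℕ} (f : EuclideanSpace ℝ (Fin d) → ℝ)
    (hf_conv : ConvexOn ℝ Set.univ f) (hf_diff : Differentiable ℝ f)
    (x z : EuclideanSpace ℝ (Fin d)) :
    f x + ⟪gradient f x, z - x⟫ ≤ f z := by
  set φ : ℝ → ℝ := fun t => f (x + t • (z - x)) with hφ
  have hφc : ConvexOn ℝ Set.univ φ := by
    refine ⟨convex_univ, ?_⟩
    intro s _ t _ a b ha hb hab
    have hb' : b = 1 - a := by linarith
    subst hb'
    have h1 : x + (a • s + (1-a) • t) • (z - x)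
        = a • (x + s • (z - x)) + (1-a) • (x + t • (z - x)) := by
      simp only [smul_eq_mul]
      module
    simp only [hφ, h1]
    exact hf_conv.2 (Set.mem_univ _) (Set.mem_univ _) ha hb hab
  have hγ : HasDerivAt (fun t : ℝ => x + t • (z - x)) (z - x) 0 := by
    simpa using ((hasDerivAt_id (0:ℝ)).smul_const (z - x)).const_add x
  have hF : HasFDerivAt f (InnerProductSpace.toDualMap ℝ _ (gradient f x)) x :=
    hasGradientAt_iff_hasFDerivAt.mp (hf_diff x).hasGradientAt
  have hF' : HasFDerivAt f (InnerProductSpace.toDualMap ℝ _ (gradient f x))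
      (x + (0:ℝ) • (z - x)) := by simpa using hF
  have hd : HasDerivAt φ ⟪gradient f x, z - x⟫ 0 := by
    have := hF'.comp_hasDerivAt 0 hγ
    simpa [hφ, Function.comp_def] using this
  have hslope := hφc.le_slope_of_hasDerivAt (Set.mem_univ (0:ℝ)) (Set.mem_univ (1:ℝ))
    one_pos hd
  rw [slope_def_field] at hslope
  have h0 : φ 0 = f x := by simp [hφ]
  have h1 : φ 1 = f z := by simp [hφ]
  simp only [h0, h1] at hslope
  have : ⟪gradient f x, z - x⟫ ≤ f z - f x := by
    simpa using hslope
  linarith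

lemma prox_subgrad {d : ℕ} (h : EuclideanSpace ℝ (Fin d) → ℝ)
    (hh_conv : ConvexOn ℝ Set.univ h) (c : ℝ) (hc : 0 < c)
    (y p : EuclideanSpace ℝ (Fin d))
    (hp : ∀ u, h p + c * ‖p - y‖ ^ 2 ≤ h u + c * ‖u - y‖ ^ 2)
    (u : EuclideanSpace ℝ (Fin d)) :
    2 * c * ⟪y - p, u - p⟫ ≤ h u - h p := by
  set I : ℝ := ⟪p - y, u - p⟫ with hI
  set N : ℝ := ‖u - p‖ ^ 2 with hN
  have hN0 : 0 ≤ N := by positivity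
  have hkey : ∀ t : ℝ, 0 < t → t ≤ 1 → -(2*c*I) ≤ h u - h p + c * t * N := by
    intro t ht0 ht1
    have hq : p + t • (u - p) = (1 - t) • p + t • u := by module
    have hconv := hh_conv.2 (Set.mem_univ p) (Set.mem_univ u)
      (by linarith : (0:ℝ) ≤ 1 - t) (le_of_lt ht0) (by ring)
    rw [← hq] at hconv
    have hmin := hp (p + t • (u - p))
    have hexp : ‖p + t • (u - p) - y‖ ^ 2 = ‖p - y‖^2 + 2 * (t * I) + t^2 * N := by
      have : p + t • (u - p) - y = (p - y) + t • (u - p) := by abel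
      rw [this, norm_add_sq_real, real_inner_smul_right, norm_smul]
      simp [hI, hN, abs_of_pos ht0]
      ring
    rw [hexp] at hmin
    have hstep : t * (h p) ≤ t * (h u + 2*c*I + c*t*N) := by
      simp only [smul_eq_mul] at hconv
      nlinarith [hmin, hconv]
    have := (mul_le_mul_iff_right₀ ht0).mp hstep
    linarith
  have hineq : ∀ ε : ℝ, 0 < ε → 2 * c * ⟪y - p, u - p⟫ ≤ h u - h p + ε := by
    intro ε hε
    have hyp : (y - p : EuclideanSpace ℝ (Fin d)) = -(p - y) := by abel
    have hinner : ⟪y - p, u - p⟫ = -I := by rw [hyp, inner_neg_left, hI]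
    set t : ℝ := min 1 (ε / (c * N + 1)) with ht
    have hden : 0 < c * N + 1 := by nlinarith
    have ht0 : 0 < t := lt_min one_pos (div_pos hε hden)
    have ht1 : t ≤ 1 := min_le_left _ _
    have ht2 : t ≤ ε / (c * N + 1) := min_le_right _ _
    have hctN : c * t * N ≤ ε := by
      have h1 : c * N * t ≤ c * N * (ε / (c * N + 1)) :=
        mul_le_mul_of_nonneg_left ht2 (by positivity)
      have h2 : c * N * (ε / (c * N + 1)) ≤ ε := by
        rw [show c * N * (ε / (c * N + 1)) = ε * (c * N) / (c * N + 1) by ring,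
          div_le_iff₀ hden]
        nlinarith
      nlinarith
    have := hkey t ht0 ht1
    rw [hinner]
    linarith
  exact le_of_forall_pos_le_add hineq

/-- Telescoping gap inequality: Fix λ > 0 and x ∈ ℝ^d, and set
x⁺ = x − λG_λ(x). If the composite linesearch condition holds at x with stepsize λ, then
for every z ∈ ℝ^d: F(x⁺) ≤ F(z) + (1/(2λ))(‖x − z‖² − ‖x⁺ − z‖²), where F = f + h and
G_λ(x) = (1/λ)(x − prox_{λh}(x − λ∇f(x))). -/
theorem stmt_11 {d : ℕ} (f h : EuclideanSpace ℝ (Fin d) → ℝ)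
    (hf_conv : ConvexOn ℝ Set.univ f) (hf_diff : Differentiable ℝ f)
    (hh_conv : ConvexOn ℝ Set.univ h)
    (lam : ℝ) (hlam : 0 < lam)
    (x p G xplus : EuclideanSpace ℝ (Fin d))
    (hp : ∀ u, h p + (1 / (2 * lam)) * ‖p - (x - lam • gradient f x)‖ ^ 2 ≤
          h u + (1 / (2 * lam)) * ‖u - (x - lam • gradient f x)‖ ^ 2)
    (hG : G = lam⁻¹ • (x - p))
    (hxplus : xplus = x - lam • G)
    (hls : f (x - (2 * lam) • G) ≤ f (x - lam • G)
            - lam * ⟪G, gradient f x⟫ + (lam / 2) * ‖G‖ ^ 2) :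
    ∀ z, f xplus + h xplus ≤ (f z + h z)
      + (1 / (2 * lam)) * (‖x - z‖ ^ 2 - ‖xplus - z‖ ^ 2) := by
  intro z
  set v := gradient f x with hv
  have hxp : x - p = lam • G := by
    rw [hG, smul_smul, mul_inv_cancel₀ hlam.ne', one_smul]
  have hxlG : x - lam • G = p := by rw [← hxp, sub_sub_cancel]
  have hxplus_p : xplus = p := by rw [hxplus, hxlG]
  -- midpoint convexity
  have hG2 : (2 * lam) • G = (2:ℝ) • (x - p) := by
    rw [hG, smul_smul]
    congr 1
    field_simp
  have hmid : p = (1/2 : ℝ) • x + (1/2 : ℝ) • (x - (2:ℝ) • (x - p)) := by module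
  have hfmid : f p ≤ (1/2) * f x + (1/2) * f (x - (2*lam) • G) := by
    have := hf_conv.2 (Set.mem_univ x) (Set.mem_univ (x - (2*lam) • G))
      (by norm_num : (0:ℝ) ≤ 1/2) (by norm_num : (0:ℝ) ≤ 1/2) (by norm_num)
    simp only [smul_eq_mul] at this
    calc f p = f ((1/2 : ℝ) • x + (1/2 : ℝ) • (x - (2*lam) • G)) := by
              rw [hG2]; exact congrArg f hmid
      _ ≤ _ := this
  rw [hxlG] at hls
  have key1 : f p ≤ f x - lam * ⟪v, G⟫ + (lam/2) * ‖G‖^2 := by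
    rw [real_inner_comm] at hls
    linarith
  have key2 : f x + ⟪v, z - x⟫ ≤ f z := grad_convex_ineq f hf_conv hf_diff x z
  -- prox subgradient
  have hc : (0:ℝ) < 1 / (2 * lam) := by positivity
  have key3' := prox_subgrad h hh_conv (1/(2*lam)) hc (x - lam • v) p hp z
  have hyp : x - lam • v - p = lam • G - lam • v := by rw [← hxp]; abel
  have key3 : ⟪G, z - p⟫ - ⟪v, z - p⟫ ≤ h z - h p := by
    have e1 : 2 * (1/(2*lam)) * ⟪x - lam • v - p, z - p⟫
        = ⟪G, z - p⟫ - ⟪v, z - p⟫ := by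
      rw [hyp, inner_sub_left, real_inner_smul_left, real_inner_smul_left]
      field_simp
    rw [e1] at key3'
    exact key3'
  -- algebra
  have hzx : ⟪v, z - x⟫ = ⟪v, z - p⟫ - lam * ⟪v, G⟫ := by
    rw [show z - x = (z - p) - lam • G by rw [← hxp]; abel, inner_sub_right,
      real_inner_smul_right]
  have hxz : x - z = (p - z) + lam • G := by rw [← hxp]; abel
  have hnorm : ‖x - z‖^2 = ‖p - z‖^2 + 2 * (lam * ⟪p - z, G⟫) + lam^2 * ‖G‖^2 := by
    rw [hxz, norm_add_sq_real, real_inner_smul_right, norm_smul]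
    simp [abs_of_pos hlam]
    ring
  have hpz : ⟪p - z, G⟫ = -⟪G, z - p⟫ := by
    rw [show (p - z : EuclideanSpace ℝ (Fin d)) = -(z - p) by abel, inner_neg_left,
      real_inner_comm]
  have hgap : (1/(2*lam)) * (‖x - z‖^2 - ‖p - z‖^2)
      = -⟪G, z - p⟫ + (lam/2) * ‖G‖^2 := by
    rw [hnorm, hpz]
    field_simp
    ring
  rw [hxplus_p, hgap]
  rw [hzx] at key2
  linarith
end

section
/- (Backtracking lower bound) Suppose the gradient of f is L-Lipschitz for some L > 0. Fix x ∈ ℝ^d, a factor C ∈ (0,1), and an initial value λ₀ ≥ 1/(3L). Then there exists i ∈ ℕ such that the stepsize λ₀Cⁱ satisfies the composite linesearch condition at x, and the largest element λ of {λ₀Cⁱ : i ∈ ℕ} satisfying the composite linesearch condition at x obeys λ ≥ C/(3L). -/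
open RealInnerProductSpace

/-- The composite linesearch condition at `x` with stepsize `lam`, where `G` is the value
of the gradient mapping `G_lam(x)`:
f(x − 2λG) ≤ f(x − λG) − λ⟨G, ∇f(x)⟩ + (λ/2)‖G‖². -/
def LinesearchCond {d : ℕ} (f : EuclideanSpace ℝ (Fin d) → ℝ) (lam : ℝ)
    (x G : EuclideanSpace ℝ (Fin d)) : Prop :=
  f (x - (2 * lam) • G) ≤ f (x - lam • G)
    - lam * ⟪G, gradient f x⟫ + (lam / 2) * ‖G‖ ^ 2

lemma descent_lemma {d : ℕ} (f : EuclideanSpace ℝ (Fin d) → ℝ)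
    (hf : Differentiable ℝ f) (L : ℝ) (hL : 0 < L)
    (hlip : ∀ a b, ‖gradient f a - gradient f b‖ ≤ L * ‖a - b‖)
    (y v : EuclideanSpace ℝ (Fin d)) :
    f (y + v) ≤ f y + ⟪gradient f y, v⟫ + L / 2 * ‖v‖ ^ 2 := by
  set g' : ℝ → ℝ := fun t => ⟪gradient f (y + t • v), v⟫ with hg'
  have hlipW : LipschitzWith (Real.toNNReal L) (gradient f) :=
    LipschitzWith.of_dist_le_mul fun a b => by
      simpa [dist_eq_norm, Real.coe_toNNReal L hL.le] using hlip a b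
  have hcurve : ∀ t : ℝ, HasDerivAt (fun s : ℝ => y + s • v) v t := by
    intro t
    simpa using ((hasDerivAt_id t).smul_const v).const_add y
  have hderiv : ∀ t : ℝ, HasDerivAt (fun s : ℝ => f (y + s • v)) (g' t) t := by
    intro t
    have h1 := (hf (y + t • v)).hasGradientAt.hasFDerivAt
    have := h1.comp_hasDerivAt t (hcurve t)
    rw [InnerProductSpace.toDual_apply_apply] at this
    exact this
  have hcontg' : Continuous g' := by
    have : Continuous fun t : ℝ => gradient f (y + t • v) :=
      hlipW.continuous.comp (by continuity)
    exact this.inner continuous_const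
  have hint : ∫ t in (0:ℝ)..1, g' t = f (y + v) - f y := by
    have := intervalIntegral.integral_eq_sub_of_hasDerivAt
      (f := fun s : ℝ => f (y + s • v)) (fun t _ => hderiv t)
      (hcontg'.intervalIntegrable 0 1)
    simpa using this
  have hmono : ∫ t in (0:ℝ)..1, g' t ≤
      ∫ t in (0:ℝ)..1, (⟪gradient f y, v⟫ + (L * ‖v‖ ^ 2) * t) := by
    apply intervalIntegral.integral_mono_on (by norm_num)
      (hcontg'.intervalIntegrable 0 1)
      ((continuous_const.add (continuous_const.mul continuous_id') : Continuous fun t : ℝ => ⟪gradient f y, v⟫ + (L * ‖v‖ ^ 2) * t).intervalIntegrable 0 1)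
    intro t ht
    have h1 : g' t - ⟪gradient f y, v⟫ = ⟪gradient f (y + t • v) - gradient f y, v⟫ := by
      rw [inner_sub_left]
    have h2 : ⟪gradient f (y + t • v) - gradient f y, v⟫ ≤
        ‖gradient f (y + t • v) - gradient f y‖ * ‖v‖ := real_inner_le_norm _ _
    have h3 : ‖gradient f (y + t • v) - gradient f y‖ ≤ L * (t * ‖v‖) := by
      have := hlip (y + t • v) y
      simpa [norm_smul, abs_of_nonneg ht.1] using this
    show g' t ≤ ⟪gradient f y, v⟫ + (L * ‖v‖ ^ 2) * t
    nlinarith [norm_nonneg v, mul_le_mul_of_nonneg_right h3 (norm_nonneg v)]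
  have hrhs : ∫ t in (0:ℝ)..1, (⟪gradient f y, v⟫ + (L * ‖v‖ ^ 2) * t) =
      ⟪gradient f y, v⟫ + L / 2 * ‖v‖ ^ 2 := by
    rw [intervalIntegral.integral_add (g := fun t : ℝ => (L * ‖v‖ ^ 2) * t) intervalIntegrable_const
      ((continuous_const.mul continuous_id' : Continuous fun t : ℝ => (L * ‖v‖ ^ 2) * t).intervalIntegrable 0 1),
      intervalIntegral.integral_const_mul, integral_id]
    simp; ring
  linarith [hint ▸ (hrhs ▸ hmono)]

lemma cond_of_small {d : ℕ} (f : EuclideanSpace ℝ (Fin d) → ℝ)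
    (hf : Differentiable ℝ f) (L : ℝ) (hL : 0 < L)
    (hlip : ∀ a b, ‖gradient f a - gradient f b‖ ≤ L * ‖a - b‖)
    (x G : EuclideanSpace ℝ (Fin d)) (lam : ℝ) (hlam : 0 < lam)
    (hle : lam ≤ 1 / (3 * L)) : LinesearchCond f lam x G := by
  have hd := descent_lemma f hf L hL hlip (x - lam • G) (-(lam • G))
  have hpt : x - lam • G + -(lam • G) = x - (2 * lam) • G := by
    rw [two_mul, add_smul]; abel
  rw [hpt, norm_neg, inner_neg_right] at hd
  set g1 := gradient f (x - lam • G) with hg1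
  have h2 : ⟪gradient f x - g1, G⟫ ≤ ‖gradient f x - g1‖ * ‖G‖ := real_inner_le_norm _ _
  have h3 : ‖gradient f x - g1‖ ≤ L * (lam * ‖G‖) := by
    have := hlip x (x - lam • G)
    simpa [norm_smul, abs_of_nonneg hlam.le] using this
  have h4 : ⟪g1, lam • G⟫ = lam * ⟪g1, G⟫ := real_inner_smul_right _ _ _
  have h5 : ⟪gradient f x - g1, G⟫ = ⟪G, gradient f x⟫ - ⟪g1, G⟫ := by
    rw [inner_sub_left, real_inner_comm]
  have hnorm : ‖lam • G‖ = lam * ‖G‖ := by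
    simp [norm_smul, abs_of_nonneg hlam.le]
  unfold LinesearchCond
  have hGn := norm_nonneg G
  have h6 : 3 * L * lam ≤ 1 := by
    rw [le_div_iff₀ (by positivity : (0:ℝ) < 3 * L)] at hle
    linarith
  rw [h4, hnorm, mul_pow] at hd
  have a2 : lam * ⟪G, gradient f x⟫ - lam * ⟪g1, G⟫ ≤ L * lam ^ 2 * ‖G‖ ^ 2 := by
    have := mul_le_mul_of_nonneg_left
      (h5 ▸ h2.trans (mul_le_mul_of_nonneg_right h3 hGn)) hlam.le
    nlinarith [this]
  have a3 : 3 * L * lam * (lam * ‖G‖ ^ 2) ≤ lam * ‖G‖ ^ 2 := by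
    simpa using mul_le_mul_of_nonneg_right h6 (mul_nonneg hlam.le (sq_nonneg ‖G‖))
  nlinarith [hd, a2, a3]

/-- Backtracking lower bound: Suppose the gradient of f is L-Lipschitz for
some L > 0. Fix x ∈ ℝ^d, a factor C ∈ (0,1), and an initial value λ₀ ≥ 1/(3L). Then there
exists i ∈ ℕ such that the stepsize λ₀Cⁱ satisfies the composite linesearch condition at
x, and the largest element λ of {λ₀Cⁱ : i ∈ ℕ} satisfying the composite linesearch
condition at x obeys λ ≥ C/(3L). Here `p i` is the prox point `prox_{λ₀Cⁱ h}(x − λ₀Cⁱ∇f(x))`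
and `G i` the corresponding gradient mapping value. -/
theorem stmt_15 {d : ℕ} (f h : EuclideanSpace ℝ (Fin d) → ℝ)
    (hf_diff : Differentiable ℝ f)
    (L : ℝ) (hL : 0 < L)
    (hf_lip : ∀ a b, ‖gradient f a - gradient f b‖ ≤ L * ‖a - b‖)
    (hh_conv : ConvexOn ℝ Set.univ h)
    (x : EuclideanSpace ℝ (Fin d))
    (C lam0 : ℝ) (hC0 : 0 < C) (hC1 : C < 1) (hlam0 : 1 / (3 * L) ≤ lam0)
    (p G : ℕ → EuclideanSpace ℝ (Fin d))
    (hp : ∀ i u, h (p i) + (1 / (2 * (lam0 * C ^ i))) *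
              ‖p i - (x - (lam0 * C ^ i) • gradient f x)‖ ^ 2 ≤
          h u + (1 / (2 * (lam0 * C ^ i))) *
              ‖u - (x - (lam0 * C ^ i) • gradient f x)‖ ^ 2)
    (hG : ∀ i, G i = (lam0 * C ^ i)⁻¹ • (x - p i)) :
    (∃ i : ℕ, LinesearchCond f (lam0 * C ^ i) x (G i)) ∧
    (∀ i : ℕ, LinesearchCond f (lam0 * C ^ i) x (G i) →
      (∀ j : ℕ, LinesearchCond f (lam0 * C ^ j) x (G j) → lam0 * C ^ j ≤ lam0 * C ^ i) →
      C / (3 * L) ≤ lam0 * C ^ i) := by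
  have hlam0pos : 0 < lam0 := lt_of_lt_of_le (by positivity) hlam0
  have key : ∀ (i : ℕ) (Gv : EuclideanSpace ℝ (Fin d)), lam0 * C ^ i ≤ 1 / (3 * L) →
      LinesearchCond f (lam0 * C ^ i) x Gv := fun i Gv hle =>
    cond_of_small f hf_diff L hL hf_lip x Gv _ (by positivity) hle
  constructor
  · obtain ⟨i, hi⟩ := exists_pow_lt_of_lt_one
      (show (0:ℝ) < 1 / (3 * L) / lam0 by positivity) hC1
    refine ⟨i, key i (G i) ?_⟩
    rw [lt_div_iff₀ hlam0pos] at hi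
    nlinarith [hi]
  · intro i hi hmax
    match i with
    | 0 =>
      simp only [pow_zero, mul_one]
      calc C / (3 * L) ≤ 1 / (3 * L) := by gcongr
          _ ≤ lam0 := hlam0
    | Nat.succ k =>
      simp only [Nat.succ_eq_add_one] at hi hmax ⊢
      by_contra hcon
      push_neg at hcon
      have hk : lam0 * C ^ k ≤ 1 / (3 * L) := by
        by_contra hgt
        push_neg at hgt
        have h7 := mul_lt_mul_of_pos_right hgt hC0
        rw [pow_succ] at hcon
        have e : C / (3 * L) = 1 / (3 * L) * C := by ring
        nlinarith [hcon, h7]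
      have hC := key k (G k) hk
      have := hmax k hC
      have hpow : C ^ (k+1) < C ^ k := by
        rw [pow_succ]
        nlinarith [pow_pos hC0 k]
      linarith [this, mul_lt_mul_of_pos_left hpow hlam0pos]
end
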